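/- arXiv:1309.7111 — 4 statements merged into one kernel-verified Lean document; each statement's English description precedes it below -/
import Mathlib

section
/- For all n ≥ 0, the number of permutations of length n avoiding the vincular pattern 231-4 equals the number of permutations of length n avoiding the vincular pattern 241-3. -/
/-
Both patterns are a consecutive `231`, entries `c < v < b` in adjacent positions, followed later
by an entry `x`, with `b < x` for 231-4 and `v < x < b` for 241-3. Prepending a first entry `r` to
a permutation of length `n` (and shifting the entries `≥ r` up) builds every permutation of length
`n + 1` exactly once; the result avoids the pattern iff the shorter one does and no occurrence
starts at `r`, which depends only on `r`, the new second and third entries and `n`. For the number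
`g n r` of avoiders of length `n` starting with `r`, both patterns thus satisfy the same recurrence
  `g (k+2) r + (k - r) * ∑_{i<r} g k i = ∑_{j<k+1} g (k+1) j`   (`r ≤ k + 1`):
there are `k - r` second entries after which an occurrence can start at `r` (those in `(r, k+1)`
for 231-4, in `(r+1, k+1]` for 241-3), and after each of them exactly the continuations with third
entry below `r` are lost. So `g` is the same for both patterns, and so is the number `g (n+1) n`
of avoiders of length `n`: no occurrence starts at the maximal entry.
-/

def Contains231d4 {n : ℕ} (π : Fin n → Fin n) : Prop :=
  ∃ (i j : ℕ) (h2 : i + 2 < n) (hj : j < n),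
    i + 2 < j ∧
    π ⟨i + 2, h2⟩ < π ⟨i, by omega⟩ ∧
    π ⟨i, by omega⟩ < π ⟨i + 1, by omega⟩ ∧
    π ⟨i + 1, by omega⟩ < π ⟨j, hj⟩

def Contains241d3 {n : ℕ} (π : Fin n → Fin n) : Prop :=
  ∃ (i j : ℕ) (h2 : i + 2 < n) (hj : j < n),
    i + 2 < j ∧
    π ⟨i + 2, h2⟩ < π ⟨i, by omega⟩ ∧
    π ⟨i, by omega⟩ < π ⟨j, hj⟩ ∧
    π ⟨j, hj⟩ < π ⟨i + 1, by omega⟩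

namespace Vincular

open Finset
open scoped Classical

variable (P : ℕ → ℕ → ℕ → Prop)

/-- An occurrence of a pattern "consecutive `231` at `v b c`, then later an entry `x` with
`P v b x`" starting at the entry `v` placed in front of the list. -/
def StartsOccurrence (v : ℕ) : List ℕ → Prop
  | b :: c :: rest => c < v ∧ v < b ∧ ∃ x ∈ rest, P v b x
  | _ => False

def Occurs : List ℕ → Prop
  | [] => False
  | v :: t => Occurs t ∨ StartsOccurrence P v t

def OrderInvariant : Prop :=
  ∀ φ : ℕ → ℕ, StrictMono φ → ∀ v b x, P (φ v) (φ b) (φ x) ↔ P v b x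

variable {P}

theorem occurs_iff_getElem {l : List ℕ} :
    Occurs P l ↔ ∃ i j, ∃ (hi : i + 2 < l.length) (hj : j < l.length),
      i + 2 < j ∧ l[i + 2] < l[i] ∧ l[i] < l[i + 1] ∧ P l[i] l[i + 1] l[j] := by
  induction l with
  | nil => simp [Occurs]
  | cons v t ih =>
    rw [Occurs, ih]
    constructor
    · rintro (⟨i, j, hi, hj, hij, h⟩ | hstart)
      · exact ⟨i + 1, j + 1, by simp; omega, by simpa using hj, by omega, by simpa using h⟩
      · obtain ⟨b, c, rest, rfl⟩ : ∃ b c rest, t = b :: c :: rest := by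
          match t, hstart with
          | b :: c :: rest, _ => exact ⟨b, c, rest, rfl⟩
        obtain ⟨hcv, hvb, x, hx, hP⟩ := hstart
        obtain ⟨k, hk, rfl⟩ := List.getElem_of_mem hx
        exact ⟨0, k + 3, by simp, by simpa using hk, by omega, hcv, hvb, by simpa using hP⟩
    · rintro ⟨_ | i, j, hi, hj, hij, h⟩
      · right
        match t, hi, hj, h with
        | b :: c :: rest, _, hj, h =>
          obtain ⟨j, rfl⟩ : ∃ j', j = j' + 3 := ⟨j - 3, by omega⟩
          simp only [List.getElem_cons_succ, List.getElem_cons_zero] at h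
          exact ⟨h.1, h.2.1, _, List.getElem_mem _, h.2.2⟩
      · obtain ⟨j, rfl⟩ : ∃ j', j = j' + 1 := ⟨j - 1, by omega⟩
        left
        exact ⟨i, j, by simp at hi; omega, by simpa using hj, by omega, by simpa using h⟩

theorem length_ge_four_of_occurs {l : List ℕ} (h : Occurs P l) : 4 ≤ l.length := by
  obtain ⟨i, j, -, hj, hij, -⟩ := occurs_iff_getElem.mp h
  omega

theorem startsOccurrence_map (hP : OrderInvariant P) {φ : ℕ → ℕ} (hφ : StrictMono φ)
    (v : ℕ) (t : List ℕ) : StartsOccurrence P (φ v) (t.map φ) ↔ StartsOccurrence P v t := by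
  match t with
  | [] | [_] => rfl
  | b :: c :: rest =>
    simp only [List.map_cons, StartsOccurrence, List.mem_map, exists_exists_and_eq_and,
      hφ.lt_iff_lt, hP φ hφ]

theorem occurs_map (hP : OrderInvariant P) {φ : ℕ → ℕ} (hφ : StrictMono φ) (l : List ℕ) :
    Occurs P (l.map φ) ↔ Occurs P l := by
  induction l with
  | nil => rfl
  | cons v t ih => rw [List.map_cons, Occurs, Occurs, ih, startsOccurrence_map hP hφ]

theorem not_startsOccurrence_of_forall_le {v : ℕ} {l : List ℕ} (h : ∀ x ∈ l, x ≤ v) :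
    ¬ StartsOccurrence P v l := by
  rcases l with _ | ⟨b, _ | ⟨c, rest⟩⟩
  · exact id
  · exact id
  · exact fun hs => absurd hs.2.1 (not_lt.mpr (h b List.mem_cons_self))

def permsOf (n : ℕ) : Finset (List ℕ) := (List.range n).permutations.toFinset

theorem mem_permsOf {n : ℕ} {l : List ℕ} : l ∈ permsOf n ↔ l.Perm (List.range n) := by
  simp [permsOf]

theorem mem_permsOf_iff_nodup {n : ℕ} {l : List ℕ} :
    l ∈ permsOf n ↔ l.Nodup ∧ ∀ x, x ∈ l ↔ x < n := by
  rw [mem_permsOf]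
  refine ⟨fun h => ⟨h.nodup_iff.2 List.nodup_range, fun x => by simpa using h.mem_iff⟩,
    fun ⟨hl, hx⟩ => (List.perm_ext_iff_of_nodup hl List.nodup_range).2 (by simpa using hx)⟩

theorem length_eq_of_mem_permsOf {n : ℕ} {l : List ℕ} (h : l ∈ permsOf n) : l.length = n := by
  simpa using (mem_permsOf.mp h).length_eq

theorem lt_of_mem_of_mem_permsOf {n x : ℕ} {l : List ℕ} (h : l ∈ permsOf n) (hx : x ∈ l) :
    x < n :=
  ((mem_permsOf_iff_nodup.mp h).2 x).mp hx

theorem mem_rest_iff_of_mem_permsOf {n a b c x : ℕ} {rest : List ℕ}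
    (h : a :: b :: c :: rest ∈ permsOf (n + 1)) :
    x ∈ rest ↔ x ≤ n ∧ x ≠ a ∧ x ≠ b ∧ x ≠ c := by
  obtain ⟨hnd, hmem⟩ := mem_permsOf_iff_nodup.mp h
  have hx := hmem x
  simp only [List.nodup_cons, List.mem_cons] at hnd hx
  constructor
  · intro hxr
    refine ⟨Nat.lt_succ_iff.mp (hx.mp (by tauto)), ?_, ?_, ?_⟩ <;> rintro rfl <;> tauto
  · rintro ⟨hxn, hxa, hxb, hxc⟩
    have := hx.mpr (by omega)
    tauto

def succAbove (a x : ℕ) : ℕ := if x < a then x else x + 1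

def predAbove (a x : ℕ) : ℕ := if x < a then x else x - 1

theorem strictMono_succAbove (a : ℕ) : StrictMono (succAbove a) := by
  intro x y h
  unfold succAbove
  split_ifs <;> omega

theorem succAbove_ne (a x : ℕ) : succAbove a x ≠ a := by
  unfold succAbove
  split_ifs <;> omega

theorem succAbove_predAbove {a x : ℕ} (h : x ≠ a) : succAbove a (predAbove a x) = x := by
  unfold succAbove predAbove
  split_ifs <;> omega

theorem succAbove_lt_iff {a m x : ℕ} (h : m ≤ a) : succAbove a x < m ↔ x < m := by
  unfold succAbove
  split_ifs <;> omega

theorem succAbove_lt_succ_iff {a n x : ℕ} (h : a ≤ n) : succAbove a x < n + 1 ↔ x < n := by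
  unfold succAbove
  split_ifs <;> omega

theorem val_finSuccAbove {n : ℕ} (p : Fin (n + 1)) (j : Fin n) :
    (p.succAbove j : ℕ) = succAbove p j := by
  unfold Fin.succAbove succAbove
  split_ifs <;> simp_all [Fin.lt_def]

theorem cons_map_succAbove_mem_permsOf {a n : ℕ} (ha : a ≤ n) {τ : List ℕ} :
    a :: τ.map (succAbove a) ∈ permsOf (n + 1) ↔ τ ∈ permsOf n := by
  have hinj := (strictMono_succAbove a).injective
  simp only [mem_permsOf_iff_nodup, List.nodup_cons, List.nodup_map_iff hinj, List.mem_cons,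
    List.mem_map, succAbove_ne, exists_false, and_false, not_false_eq_true, true_and]
  refine and_congr_right fun _ => ⟨fun h y => ?_, fun h x => ?_⟩
  · simpa [succAbove_ne, hinj.eq_iff, succAbove_lt_succ_iff ha] using h (succAbove a y)
  · by_cases hx : x = a
    · simp only [hx, true_or, true_iff]
      omega
    · rw [← succAbove_predAbove hx]
      simp [succAbove_ne, hinj.eq_iff, succAbove_lt_succ_iff ha, h]

theorem exists_eq_map_succAbove {a n : ℕ} {t : List ℕ} (h : a :: t ∈ permsOf (n + 1)) :
    a ≤ n ∧ ∃ τ ∈ permsOf n, t = τ.map (succAbove a) := by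
  obtain ⟨hnd, hmem⟩ := mem_permsOf_iff_nodup.mp h
  have ha : a ≤ n := Nat.lt_succ_iff.mp ((hmem a).mp (List.mem_cons_self ..))
  have ht : (t.map (predAbove a)).map (succAbove a) = t := by
    rw [List.map_map]
    nth_rw 2 [← List.map_id t]
    exact List.map_congr_left fun x hx =>
      succAbove_predAbove fun hxa => (List.nodup_cons.mp hnd).1 (hxa ▸ hx)
  refine ⟨ha, t.map (predAbove a), ?_, ht.symm⟩
  rw [← cons_map_succAbove_mem_permsOf ha, ht]
  exact h

theorem cons_map_succAbove_injective (a : ℕ) :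
    Function.Injective fun τ : List ℕ => a :: τ.map (succAbove a) :=
  fun _ _ h => List.map_injective_iff.mpr (strictMono_succAbove a).injective (List.cons_injective h)

def permList {n : ℕ} (π : Fin n → Fin n) : List ℕ := List.ofFn fun i => (π i : ℕ)

theorem permList_mem_permsOf {n : ℕ} (π : Equiv.Perm (Fin n)) : permList π ∈ permsOf n := by
  refine mem_permsOf_iff_nodup.mpr ⟨List.nodup_ofFn.mpr (Fin.val_injective.comp π.injective),
    fun x => ⟨?_, fun hx => ?_⟩⟩
  · simp only [permList, List.mem_ofFn]
    rintro ⟨i, rfl⟩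
    exact (π i).isLt
  · exact List.mem_ofFn.mpr ⟨π.symm ⟨x, hx⟩, by simp⟩

theorem permList_injective (n : ℕ) :
    Function.Injective fun π : Equiv.Perm (Fin n) => permList ⇑π :=
  fun _ _ h => Equiv.ext fun i => Fin.ext (congrFun (List.ofFn_injective h) i)

theorem image_permList_univ (n : ℕ) :
    univ.image (fun π : Equiv.Perm (Fin n) => permList ⇑π) = permsOf n := by
  refine eq_of_subset_of_card_le (fun l hl => ?_) ?_
  · obtain ⟨π, -, rfl⟩ := mem_image.mp hl
    exact permList_mem_permsOf π
  · rw [card_image_of_injective _ (permList_injective n), card_univ, Fintype.card_perm,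
      Fintype.card_fin, permsOf, List.toFinset_card_of_nodup (List.nodup_permutations _
      List.nodup_range), List.length_permutations, List.length_range]

variable (P) in
noncomputable def avoiders (n : ℕ) : Finset (List ℕ) := {l ∈ permsOf n | ¬ Occurs P l}

theorem avoiders_eq_permsOf {n : ℕ} (hn : n < 4) : avoiders P n = permsOf n :=
  filter_true_of_mem fun l hl hocc => by
    have := length_ge_four_of_occurs hocc
    rw [length_eq_of_mem_permsOf hl] at this
    omega

theorem card_perm_not_occurs {n : ℕ} {C : (Fin n → Fin n) → Prop}
    (hC : ∀ π, C π ↔ Occurs P (permList π)) :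
    Nat.card {π : Equiv.Perm (Fin n) // ¬ C π} = #(avoiders P n) := by
  rw [Nat.card_eq_fintype_card, Fintype.card_subtype, avoiders, ← image_permList_univ,
    filter_image, card_image_of_injective _ (permList_injective n)]
  simp only [hC]

theorem card_filter_avoiders_cons (hP : OrderInvariant P) {a n : ℕ} (ha : a ≤ n)
    (q : List ℕ → Prop) :
    #{l ∈ avoiders P (n + 1) | ∃ t, l = a :: t ∧ q t} =
      #{τ ∈ avoiders P n |
        ¬ StartsOccurrence P a (τ.map (succAbove a)) ∧ q (τ.map (succAbove a))} := by
  rw [eq_comm, ← card_image_of_injective _ (cons_map_succAbove_injective a)]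
  congr 1
  ext l
  simp only [avoiders, mem_filter, mem_image]
  constructor
  · rintro ⟨τ, ⟨⟨hτ, hocc⟩, hs, hq⟩, rfl⟩
    refine ⟨⟨(cons_map_succAbove_mem_permsOf ha).mpr hτ, ?_⟩, _, rfl, hq⟩
    rw [Occurs, occurs_map hP (strictMono_succAbove a)]
    exact not_or.mpr ⟨hocc, hs⟩
  · rintro ⟨⟨hl, hocc⟩, t, rfl, hq⟩
    obtain ⟨-, τ, hτ, rfl⟩ := exists_eq_map_succAbove hl
    rw [Occurs, occurs_map hP (strictMono_succAbove a), not_or] at hocc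
    exact ⟨τ, ⟨⟨hτ, hocc.1⟩, hocc.2, hq⟩, rfl⟩

variable (P) in
noncomputable def countPair (n a b : ℕ) : ℕ := #{l ∈ avoiders P n | ∃ t, l = a :: b :: t}

variable (P) in
noncomputable def countHead (n a m : ℕ) : ℕ :=
  #{l ∈ avoiders P n | ∃ t, l = a :: t ∧ ∀ c ∈ t.head?, m ≤ c}

theorem countPair_self (n a : ℕ) : countPair P n a a = 0 :=
  card_eq_zero.mpr <| filter_eq_empty_iff.mpr fun l hl ⟨t, hlt⟩ => by
    have := (mem_permsOf_iff_nodup.mp (mem_filter.mp hl).1).1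
    simp [hlt] at this

theorem countHead_eq_add (n s m : ℕ) :
    countHead P n s m = countHead P n s (m + 1) + countPair P n s m := by
  rw [countHead, countHead, countPair, ← card_union_of_disjoint]
  · congr 1
    ext l
    rcases l with _ | ⟨x, _ | ⟨c, t⟩⟩ <;> simp [Nat.le_iff_lt_or_eq, eq_comm, and_or_left]
  · refine disjoint_filter.mpr fun l _ ⟨t, hl, ht⟩ ⟨t', hl'⟩ => ?_
    subst hl'
    simp only [List.cons.injEq] at hl
    simp [← hl.2] at ht

theorem countHead_add_sum (n s m : ℕ) :
    countHead P n s m + ∑ i ∈ range m, countPair P n s i = countHead P n s 0 := by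
  induction m with
  | zero => simp
  | succ m ih => rw [sum_range_succ, ← ih, countHead_eq_add n s m]; ring

theorem countHead_eq_zero_of_le {n s : ℕ} (hn : n ≤ s) (m : ℕ) : countHead P n s m = 0 :=
  card_eq_zero.mpr <| filter_eq_empty_iff.mpr fun l hl ⟨t, hlt, _⟩ => by
    have := lt_of_mem_of_mem_permsOf (mem_filter.mp hl).1 (hlt ▸ List.mem_cons_self ..)
    omega

theorem countHead_zero_eq_sum {n : ℕ} (hn : 2 ≤ n) (s : ℕ) :
    countHead P n s 0 = ∑ c ∈ range n, countPair P n s c := by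
  suffices countHead P n s n = 0 by rw [← countHead_add_sum n s n, this, zero_add]
  refine card_eq_zero.mpr <| filter_eq_empty_iff.mpr fun l hl ⟨t, hlt, ht⟩ => ?_
  have hl := (mem_filter.mp hl).1
  rcases t with _ | ⟨c, t⟩
  · have := length_eq_of_mem_permsOf hl
    rw [hlt, List.length_singleton] at this
    omega
  · have := lt_of_mem_of_mem_permsOf hl (hlt ▸ List.mem_cons_of_mem _ List.mem_cons_self)
    exact absurd (ht c rfl) (not_le.mpr this)

theorem countPair_succ_succAbove (hP : OrderInvariant P) {n a b m : ℕ} (ha : a ≤ n)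
    (hma : m ≤ a)
    (hm : ∀ c rest, a :: succAbove a b :: c :: rest ∈ permsOf (n + 1) →
      (StartsOccurrence P a (succAbove a b :: c :: rest) ↔ c < m)) :
    countPair P (n + 1) a (succAbove a b) = countHead P n b m := by
  have hfilter : {l ∈ avoiders P (n + 1) | ∃ t, l = a :: succAbove a b :: t} =
      {l ∈ avoiders P (n + 1) | ∃ t, l = a :: t ∧ ∃ t', t = succAbove a b :: t'} :=
    filter_congr fun l _ => by simp
  rw [countPair, countHead, hfilter, card_filter_avoiders_cons hP ha]
  congr 1
  refine filter_congr fun τ hτ => ?_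
  have hτ' := (cons_map_succAbove_mem_permsOf ha).mpr (mem_filter.mp hτ).1
  have hinj := (strictMono_succAbove a).injective
  rcases τ with _ | ⟨x, _ | ⟨c, rest⟩⟩
  · simp
  · simp [StartsOccurrence, hinj.eq_iff]
  · by_cases hx : x = b
    · subst hx
      simp only [List.map_cons] at hτ' ⊢
      simp [hm _ _ hτ', succAbove_lt_iff hma]
    · simp [hx, hinj.eq_iff]

theorem countPair_succ_of_lt (hP : OrderInvariant P) {n a b : ℕ} (hba : b < a) (ha : a ≤ n) :
    countPair P (n + 1) a b = countHead P n b 0 := by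
  have hb : succAbove a b = b := if_pos hba
  have := countPair_succ_succAbove hP ha (Nat.zero_le a) (b := b) fun c rest _ => by
    rw [hb]
    exact iff_of_false (fun h => absurd h.2.1 (by omega)) (Nat.not_lt_zero c)
  rwa [hb] at this

theorem countHead_succ_succ_add_sum (hP : OrderInvariant P) {k r : ℕ} (hr : r ≤ k + 1)
    (m : ℕ → ℕ) (hm_le : ∀ c, m c ≤ r) (hm_zero : ∀ c ≤ r, m c = 0)
    (hm : ∀ c ≠ r, ∀ d rest, r :: c :: d :: rest ∈ permsOf (k + 2) →
      (StartsOccurrence P r (c :: d :: rest) ↔ d < m c)) :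
    countHead P (k + 2) r 0 + ∑ c ∈ range (k + 2), ∑ i ∈ range (m c), countHead P k i 0 =
      ∑ j ∈ range (k + 1), countHead P (k + 1) j 0 := by
  have hterm (j : Fin (k + 1)) : countPair P (k + 2) r (succAbove r j) +
      ∑ i ∈ range (m (succAbove r j)), countHead P k i 0 = countHead P (k + 1) j 0 := by
    have hmj : m (succAbove r j) ≤ j := by
      unfold succAbove
      split_ifs with h
      · exact (hm_zero j h.le).trans_le (Nat.zero_le j)
      · exact (hm_le _).trans (not_lt.mp h)
    rw [countPair_succ_succAbove hP hr (hm_le _) (hm _ (succAbove_ne r j)),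
      ← countHead_add_sum (k + 1) j]
    refine congrArg _ (sum_congr rfl fun i hi => (countPair_succ_of_lt hP ?_ (by omega)).symm)
    exact (mem_range.mp hi).trans_le hmj
  rw [countHead_zero_eq_sum (by omega), ← sum_add_distrib,
    sum_range fun c => countPair P (k + 2) r c + ∑ i ∈ range (m c), countHead P k i 0,
    Fin.sum_univ_succAbove _ ⟨r, by omega⟩]
  simp only [countPair_self, hm_zero r le_rfl, sum_range_zero, zero_add, val_finSuccAbove, hterm]
  exact (sum_range fun j => countHead P (k + 1) j 0).symm

theorem card_avoiders_eq_countHead (hP : OrderInvariant P) (n : ℕ) :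
    #(avoiders P n) = countHead P (n + 1) n 0 := by
  have hfilter : {l ∈ avoiders P (n + 1) | ∃ t, l = n :: t ∧ ∀ c ∈ t.head?, 0 ≤ c} =
      {l ∈ avoiders P (n + 1) | ∃ t, l = n :: t ∧ True} :=
    filter_congr fun l _ => by simp
  rw [countHead, hfilter, card_filter_avoiders_cons hP le_rfl]
  simp only [and_true]
  rw [filter_true_of_mem]
  intro τ hτ
  refine not_startsOccurrence_of_forall_le fun x hx => ?_
  obtain ⟨y, hy, rfl⟩ := List.mem_map.mp hx
  have := lt_of_mem_of_mem_permsOf (mem_filter.mp hτ).1 hy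
  simp [succAbove, this, this.le]

theorem sum_sum_range_ite (s : Finset ℕ) (p : ℕ → Prop) [DecidablePred p] (r : ℕ) (g : ℕ → ℕ) :
    ∑ c ∈ s, ∑ i ∈ range (if p c then r else 0), g i = #{c ∈ s | p c} * ∑ i ∈ range r, g i := by
  simp only [apply_ite (fun m => ∑ i ∈ range m, g i), sum_range_zero, sum_ite, sum_const_zero,
    add_zero, sum_const, smul_eq_mul]

/- The conditions on the fourth entry `x` relative to the entries `v` and `b` that play `2` and `3`
in the consecutive `231`. -/

def Fourth231d4 : ℕ → ℕ → ℕ → Prop := fun _ b x => b < x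

def Fourth241d3 : ℕ → ℕ → ℕ → Prop := fun v b x => v < x ∧ x < b

theorem orderInvariant_fourth231d4 : OrderInvariant Fourth231d4 :=
  fun _ hφ _ _ _ => hφ.lt_iff_lt

theorem orderInvariant_fourth241d3 : OrderInvariant Fourth241d3 :=
  fun _ hφ _ _ _ => and_congr hφ.lt_iff_lt hφ.lt_iff_lt

theorem contains231d4_iff_occurs {n : ℕ} (π : Fin n → Fin n) :
    Contains231d4 π ↔ Occurs Fourth231d4 (permList π) := by
  simp [occurs_iff_getElem, permList, Contains231d4, Fourth231d4]

theorem contains241d3_iff_occurs {n : ℕ} (π : Fin n → Fin n) :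
    Contains241d3 π ↔ Occurs Fourth241d3 (permList π) := by
  simp only [occurs_iff_getElem, permList, Contains241d3, Fourth241d3, List.length_ofFn,
    List.getElem_ofFn, Fin.val_fin_lt]
  constructor
  · rintro ⟨i, j, hi, hj, hij, h1, h2, h3⟩
    exact ⟨i, j, hi, hj, hij, h1, h2.trans h3, h2, h3⟩
  · rintro ⟨i, j, hi, hj, hij, h1, -, h2, h3⟩
    exact ⟨i, j, hi, hj, hij, h1, h2, h3⟩

theorem startsOccurrence231d4_iff {n a b c : ℕ} {rest : List ℕ}
    (h : a :: b :: c :: rest ∈ permsOf (n + 1)) :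
    StartsOccurrence Fourth231d4 a (b :: c :: rest) ↔ c < a ∧ a < b ∧ b < n := by
  simp only [StartsOccurrence, Fourth231d4]
  constructor
  · rintro ⟨hca, hab, x, hx, hbx⟩
    exact ⟨hca, hab, hbx.trans_le ((mem_rest_iff_of_mem_permsOf h).mp hx).1⟩
  · rintro ⟨hca, hab, hbn⟩
    refine ⟨hca, hab, n, (mem_rest_iff_of_mem_permsOf h).mpr ?_, hbn⟩
    exact ⟨le_rfl, by omega, by omega, by omega⟩

theorem startsOccurrence241d3_iff {n a b c : ℕ} {rest : List ℕ}
    (h : a :: b :: c :: rest ∈ permsOf (n + 1)) :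
    StartsOccurrence Fourth241d3 a (b :: c :: rest) ↔ c < a ∧ a + 1 < b := by
  simp only [StartsOccurrence, Fourth241d3]
  constructor
  · rintro ⟨hca, -, x, -, hax, hxb⟩
    exact ⟨hca, by omega⟩
  · rintro ⟨hca, hab⟩
    have hb := lt_of_mem_of_mem_permsOf h (List.mem_cons_of_mem _ List.mem_cons_self)
    refine ⟨hca, by omega, a + 1, (mem_rest_iff_of_mem_permsOf h).mpr ?_, by omega, hab⟩
    exact ⟨by omega, by omega, by omega, by omega⟩

theorem countHead231d4_succ_succ {k r : ℕ} (hr : r ≤ k + 1) :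
    countHead Fourth231d4 (k + 2) r 0 + (k - r) * ∑ i ∈ range r, countHead Fourth231d4 k i 0 =
      ∑ j ∈ range (k + 1), countHead Fourth231d4 (k + 1) j 0 := by
  have hcard : #{c ∈ range (k + 2) | r < c ∧ c < k + 1} = k - r := by
    rw [show {c ∈ range (k + 2) | r < c ∧ c < k + 1} = Ioo r (k + 1) by
      ext c; simp only [mem_filter, mem_range, mem_Ioo]; omega,
      Nat.card_Ioo]
    omega
  have := countHead_succ_succ_add_sum orderInvariant_fourth231d4 hr
    (fun c => if r < c ∧ c < k + 1 then r else 0) (fun c => by split_ifs <;> omega)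
    (fun c hc => if_neg (by omega))
    (fun c hc d rest h => by rw [startsOccurrence231d4_iff h]; split_ifs <;> omega)
  rwa [sum_sum_range_ite, hcard] at this

theorem countHead241d3_succ_succ {k r : ℕ} (hr : r ≤ k + 1) :
    countHead Fourth241d3 (k + 2) r 0 + (k - r) * ∑ i ∈ range r, countHead Fourth241d3 k i 0 =
      ∑ j ∈ range (k + 1), countHead Fourth241d3 (k + 1) j 0 := by
  have hcard : #{c ∈ range (k + 2) | r + 1 < c} = k - r := by
    rw [show {c ∈ range (k + 2) | r + 1 < c} = Ioo (r + 1) (k + 2) by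
      ext c; simp only [mem_filter, mem_range, mem_Ioo]; omega,
      Nat.card_Ioo]
    omega
  have := countHead_succ_succ_add_sum orderInvariant_fourth241d3 hr
    (fun c => if r + 1 < c then r else 0) (fun c => by split_ifs <;> omega)
    (fun c hc => if_neg (by omega))
    (fun c hc d rest h => by rw [startsOccurrence241d3_iff h]; split_ifs <;> omega)
  rwa [sum_sum_range_ite, hcard] at this

theorem countHead231d4_eq_countHead241d3 (n r : ℕ) :
    countHead Fourth231d4 n r 0 = countHead Fourth241d3 n r 0 := by
  induction n using Nat.strong_induction_on generalizing r with
  | _ n ih =>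
    match n, ih with
    | 0, _ | 1, _ =>
      simp only [countHead, avoiders_eq_permsOf (by norm_num : (0 : ℕ) < 4),
        avoiders_eq_permsOf (by norm_num : (1 : ℕ) < 4)]
    | k + 2, ih =>
      rcases le_or_gt r (k + 1) with hr | hr
      · have hA := countHead231d4_succ_succ hr
        simp only [ih k (by omega), ih (k + 1) (by omega)] at hA
        exact Nat.add_right_cancel (hA.trans (countHead241d3_succ_succ hr).symm)
      · rw [countHead_eq_zero_of_le hr, countHead_eq_zero_of_le hr]

end Vincular

theorem wilf_231d4_241d3 (n : ℕ) :
    Nat.card {π : Equiv.Perm (Fin n) // ¬ Contains231d4 ⇑π} =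
      Nat.card {π : Equiv.Perm (Fin n) // ¬ Contains241d3 ⇑π} := by
  rw [Vincular.card_perm_not_occurs Vincular.contains231d4_iff_occurs,
    Vincular.card_perm_not_occurs Vincular.contains241d3_iff_occurs,
    Vincular.card_avoiders_eq_countHead Vincular.orderInvariant_fourth231d4,
    Vincular.card_avoiders_eq_countHead Vincular.orderInvariant_fourth241d3,
    Vincular.countHead231d4_eq_countHead241d3]
end

section
/- For all n ≥ 0, the number of permutations of length n avoiding the vincular pattern 14-2-3 equals the number of permutations of length n avoiding the vincular pattern 41-2-3. -/
/-!
Call adjacent entries `π i, π (i+1)` dangerous if some increasing pair further right has both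
values strictly between them. Then `π` contains 14-2-3 iff it has a dangerous ascent and
41-2-3 iff it has a dangerous descent. Flipping a dangerous ascent yields a dangerous descent and
vice versa, so "flip a dangerous descent" is the converse of the rewriting relation "flip a
dangerous ascent". Both relations terminate (flips move the permutation monotonically in the
lexicographic order) and are locally confluent (flips at distant positions commute, flips at
overlapping positions are closed up by the braid relation), so by Newman's lemma each class of the
generated equivalence relation contains exactly one permutation without dangerous ascents and
exactly one without dangerous descents.
-/

/-- `π` contains 14-2-3: indices `i+1 < j < k` with `π i < π j < π k < π (i+1)`. -/
def Contains14d2d3 {n : ℕ} (π : Fin n → Fin n) : Prop :=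
  ∃ (i j k : ℕ) (hi : i + 1 < n) (hk : k < n) (hij : i + 1 < j) (hjk : j < k),
    π ⟨i, by omega⟩ < π ⟨j, by omega⟩ ∧
    π ⟨j, by omega⟩ < π ⟨k, hk⟩ ∧
    π ⟨k, hk⟩ < π ⟨i + 1, hi⟩

/-- `π` contains 41-2-3: indices `i+1 < j < k` with `π (i+1) < π j < π k < π i`. -/
def Contains41d2d3 {n : ℕ} (π : Fin n → Fin n) : Prop :=
  ∃ (i j k : ℕ) (hi : i + 1 < n) (hk : k < n) (hij : i + 1 < j) (hjk : j < k),
    π ⟨i + 1, hi⟩ < π ⟨j, by omega⟩ ∧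
    π ⟨j, by omega⟩ < π ⟨k, hk⟩ ∧
    π ⟨k, hk⟩ < π ⟨i, by omega⟩

open Function

namespace Relation

variable {α : Type*} {r : α → α → Prop}

def IsNormalForm (r : α → α → Prop) (a : α) : Prop := ∀ b, ¬ r a b

def LocallyConfluent (r : α → α → Prop) : Prop :=
  ∀ ⦃a b c⦄, r a b → r a c → Join (ReflTransGen r) b c

theorem IsNormalForm.eq_of_reflTransGen {a b : α} (ha : IsNormalForm r a)
    (hab : ReflTransGen r a b) : a = b := by
  rcases hab.cases_head with rfl | ⟨c, hac, -⟩
  · rfl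
  · exact absurd hac (ha c)

theorem exists_reflTransGen_isNormalForm (hwf : WellFounded (swap r)) (a : α) :
    ∃ b, ReflTransGen r a b ∧ IsNormalForm r b := by
  induction a using hwf.induction with
  | _ a ih =>
    by_cases ha : IsNormalForm r a
    · exact ⟨a, .refl, ha⟩
    · obtain ⟨c, hac⟩ := not_forall_not.mp ha
      obtain ⟨b, hcb, hb⟩ := ih c hac
      exact ⟨b, .head hac hcb, hb⟩

/-- Newman's lemma. -/
theorem LocallyConfluent.join (hlc : LocallyConfluent r) (hwf : WellFounded (swap r))
    {a b c : α} (hab : ReflTransGen r a b) (hac : ReflTransGen r a c) :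
    Join (ReflTransGen r) b c := by
  induction a using hwf.induction generalizing b c with
  | _ a ih =>
    rcases hab.cases_head with rfl | ⟨b', hab', hb'b⟩
    · exact ⟨c, hac, .refl⟩
    rcases hac.cases_head with rfl | ⟨c', hac', hc'c⟩
    · exact ⟨b, .refl, .head hab' hb'b⟩
    obtain ⟨d, hb'd, hc'd⟩ := hlc hab' hac'
    obtain ⟨e, hbe, hde⟩ := ih b' hab' hb'b hb'd
    obtain ⟨f, hcf, hef⟩ := ih c' hac' hc'c (hc'd.trans hde)
    exact ⟨f, hbe.trans hef, hcf⟩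

theorem wellFounded_of_map_lt [Finite α] {β : Type*} [Preorder β] (f : α → β)
    (hf : ∀ ⦃a b⦄, r a b → f a < f b) : WellFounded r :=
  have : IsTrans α (fun a b ↦ f a < f b) := ⟨fun _ _ _ ↦ lt_trans⟩
  have : Std.Irrefl (fun a b ↦ f a < f b) := ⟨fun a ↦ lt_irrefl (f a)⟩
  Subrelation.wf (fun h ↦ hf h) (Finite.wellFounded_of_trans_of_irrefl _)

theorem card_isNormalForm_swap_le [Finite α] (hwf : WellFounded (swap r))
    (hwf' : WellFounded r) (hlc : LocallyConfluent (swap r)) :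
    Nat.card {a // IsNormalForm (swap r) a} ≤ Nat.card {a // IsNormalForm r a} := by
  choose F hF using fun a : {a // IsNormalForm (swap r) a} ↦
    exists_reflTransGen_isNormalForm hwf a.1
  refine Nat.card_le_card_of_injective (fun a ↦ ⟨F a, (hF a).2⟩) fun a b hab ↦ ?_
  have hFab : F a = F b := congrArg Subtype.val hab
  obtain ⟨d, had, hbd⟩ := hlc.join hwf' (reflTransGen_swap.mpr (hF a).1)
    (reflTransGen_swap.mpr (hFab ▸ (hF b).1))
  exact Subtype.ext <| (a.2.eq_of_reflTransGen had).trans (b.2.eq_of_reflTransGen hbd).symm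

theorem card_isNormalForm_eq_card_isNormalForm_swap [Finite α] {β : Type*} [Preorder β]
    (f : α → β) (hf : ∀ ⦃a b⦄, r a b → f a < f b) (hlc : LocallyConfluent r)
    (hlc' : LocallyConfluent (swap r)) :
    Nat.card {a // IsNormalForm r a} = Nat.card {a // IsNormalForm (swap r) a} := by
  have hwf : WellFounded r := wellFounded_of_map_lt f hf
  have hwf' : WellFounded (swap r) :=
    wellFounded_of_map_lt (fun a ↦ OrderDual.toDual (f a)) fun _ _ h ↦
      OrderDual.toDual_lt_toDual.mpr (hf h)
  exact le_antisymm (card_isNormalForm_swap_le (r := swap r) hwf hwf' hlc)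
    (card_isNormalForm_swap_le hwf' hwf hlc')

end Relation

open Equiv Set Relation

theorem Set.notMem_uIoo_of_mem_uIoo {α : Type*} [LinearOrder α] {a b c : α}
    (h : b ∈ uIoo a c) : c ∉ uIoo a b := by
  intro h'
  simp only [uIoo, mem_Ioo, inf_lt_iff, lt_sup_iff] at h h'
  grind

namespace Vincular

variable {n : ℕ}

def IncPairAfter (π : Perm (Fin n)) (t : Fin n) (s : Set (Fin n)) : Prop :=
  ∃ k l, t < k ∧ k < l ∧ π k ∈ s ∧ π l ∈ s ∧ π k < π l

/-- `cond` is `(· < ·)` for a dangerous ascent at `i, j = i + 1`, `(· > ·)` for a dangerous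
descent. -/
def CanFlip (cond : Fin n → Fin n → Prop) (π : Perm (Fin n)) (i j : Fin n) : Prop :=
  (j : ℕ) = i + 1 ∧ cond (π i) (π j) ∧ IncPairAfter π j (uIoo (π i) (π j))

def Flip (cond : Fin n → Fin n → Prop) (π σ : Perm (Fin n)) : Prop :=
  ∃ i j, CanFlip cond π i j ∧ σ = π * swap i j

theorem swap_apply_lt_swap_apply {i j k l : Fin n} (hij : (j : ℕ) = i + 1) (hkl : k < l)
    (hne : ¬(k = i ∧ l = j)) : swap i j k < swap i j l := by
  rw [swap_apply_def, swap_apply_def]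
  simp only [Fin.ext_iff, Fin.lt_def] at hkl hne
  split_ifs <;> simp only [Fin.ext_iff, Fin.lt_def] at * <;> omega

theorem lt_swap_apply {α : Type*} [LinearOrder α] {t i j k : α} (hti : t < i) (hij : i < j)
    (htk : t < k) : t < swap i j k := by
  rw [swap_apply_def]
  split_ifs
  exacts [hti.trans hij, hti, htk]

variable {cond : Fin n → Fin n → Prop} {π σ : Perm (Fin n)} {s : Set (Fin n)}

namespace IncPairAfter

theorem mono {t t' : Fin n} {s' : Set (Fin n)} (h : IncPairAfter π t s) (ht : t' ≤ t)
    (hs : s ⊆ s') : IncPairAfter π t' s' :=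
  let ⟨k, l, htk, hkl, hk, hl, hlt⟩ := h
  ⟨k, l, ht.trans_lt htk, hkl, hs hk, hs hl, hlt⟩

theorem mul_swap_of_le {t i j : Fin n} (h : IncPairAfter π t s) (hi : i ≤ t) (hj : j ≤ t) :
    IncPairAfter (π * swap i j) t s := by
  obtain ⟨k, l, htk, hkl, hk, hl, hlt⟩ := h
  have hσ (x : Fin n) (hx : t < x) : (π * swap i j) x = π x := by
    rw [Perm.mul_apply, swap_apply_of_ne_of_ne (hi.trans_lt hx).ne' (hj.trans_lt hx).ne']
  have hσl := hσ l (htk.trans hkl)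
  exact ⟨k, l, htk, hkl, by rwa [hσ k htk], by rwa [hσl], by rwa [hσ k htk, hσl]⟩

theorem of_succ {t t' : Fin n} (h : IncPairAfter π t s) (ht : (t' : ℕ) = t + 1)
    (hs : π t' ∉ s) : IncPairAfter π t' s := by
  obtain ⟨k, l, htk, hkl, hk, hl, hlt⟩ := h
  have hkt : k ≠ t' := by rintro rfl; exact hs hk
  refine ⟨k, l, ?_, hkl, hk, hl, hlt⟩
  rw [Fin.lt_def] at htk ⊢
  rw [Ne, Fin.ext_iff] at hkt
  omega

/-- If the flipped pair was itself the witness, the pair witnessing its danger takes over;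
any other witness just moves along with the swap. -/
theorem mul_swap_of_lt {t i j : Fin n} (h : IncPairAfter π t s) (hs : s.OrdConnected)
    (hd : IncPairAfter π j (uIoo (π i) (π j))) (hij : (j : ℕ) = i + 1) (hti : t < i) :
    IncPairAfter (π * swap i j) t s := by
  have hij' : i < j := by rw [Fin.lt_def]; omega
  obtain ⟨k, l, htk, hkl, hk, hl, hlt⟩ := h
  by_cases hkl' : k = i ∧ l = j
  · obtain ⟨rfl, rfl⟩ := hkl'
    exact (hd.mul_swap_of_le hij'.le le_rfl).mono (hti.trans hij').le
      (uIoo_subset_uIcc_self.trans (hs.uIcc_subset hk hl))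
  · have hσ (x : Fin n) : (π * swap i j) (swap i j x) = π x := by
      rw [Perm.mul_apply, swap_apply_self]
    exact ⟨swap i j k, swap i j l, lt_swap_apply hti hij' htk,
      swap_apply_lt_swap_apply hij hkl hkl', by rwa [hσ], by rwa [hσ], by rwa [hσ, hσ]⟩

end IncPairAfter

theorem CanFlip.flip {i j : Fin n} (h : CanFlip cond π i j) : Flip cond π (π * swap i j) :=
  ⟨i, j, h, rfl⟩

theorem CanFlip.lt {i j : Fin n} (h : CanFlip cond π i j) : i < j := by
  rw [Fin.lt_def, h.1]; omega

theorem Flip.swap (h : Flip cond π σ) : Flip (Function.swap cond) σ π := by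
  obtain ⟨i, j, hf, rfl⟩ := h
  have hi : (π * swap i j) i = π j := by simp [Perm.mul_apply]
  have hj : (π * swap i j) j = π i := by simp [Perm.mul_apply]
  refine ⟨i, j, ⟨hf.1, ?_, ?_⟩, by rw [mul_assoc, swap_mul_self, mul_one]⟩
  · rw [hi, hj]; exact hf.2.1
  · rw [hi, hj, uIoo_comm]; exact hf.2.2.mul_swap_of_le hf.lt.le le_rfl

theorem swap_flip : Function.swap (Flip cond) = Flip (Function.swap cond) :=
  funext₂ fun _ _ ↦ propext ⟨Flip.swap, Flip.swap⟩

theorem join_of_lt {i₁ j₁ i₂ j₂ : Fin n} (h₁ : CanFlip cond π i₁ j₁) (h₂ : CanFlip cond π i₂ j₂)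
    (h : j₁ < i₂) : Join (ReflTransGen (Flip cond)) (π * swap i₁ j₁) (π * swap i₂ j₂) := by
  have h₁₂ := h₁.lt; have h₂₂ := h₂.lt
  have v₁ : ∀ x, j₁ < x → (π * swap i₁ j₁) x = π x := fun x hx ↦ by
    rw [Perm.mul_apply, swap_apply_of_ne_of_ne (h₁₂.trans hx).ne' hx.ne']
  have v₂ : ∀ x, x < i₂ → (π * swap i₂ j₂) x = π x := fun x hx ↦ by
    rw [Perm.mul_apply, swap_apply_of_ne_of_ne hx.ne (hx.trans h₂₂).ne]
  have hcomm : π * swap i₁ j₁ * swap i₂ j₂ = π * swap i₂ j₂ * swap i₁ j₁ := by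
    have h₁₃ := h₁₂.trans h
    rw [mul_assoc, (Perm.disjoint_swap_swap ?_).commute.eq, ← mul_assoc]
    simp [h₁₂.ne, h₁₃.ne, (h₁₃.trans h₂₂).ne, h.ne, (h.trans h₂₂).ne, h₂₂.ne]
  refine ⟨_, .single (CanFlip.flip ⟨h₂.1, ?_, ?_⟩), hcomm ▸ .single (CanFlip.flip ⟨h₁.1, ?_, ?_⟩)⟩
  · rw [v₁ _ h, v₁ _ (h.trans h₂₂)]; exact h₂.2.1
  · rw [v₁ _ h, v₁ _ (h.trans h₂₂)]
    exact h₂.2.2.mul_swap_of_le (h₁₂.trans (h.trans h₂₂)).le (h.trans h₂₂).le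
  · rw [v₂ _ (h₁₂.trans h), v₂ _ h]; exact h₁.2.1
  · rw [v₂ _ (h₁₂.trans h), v₂ _ h]
    exact h₁.2.2.mul_swap_of_lt ordConnected_Ioo h₂.2.2 h₂.1 h

theorem join_of_adjacent (hcond : ∀ a b c, cond a b → cond b c → cond a c ∧ b ∈ uIoo a c)
    {i j k : Fin n} (h₁ : CanFlip cond π i j) (h₂ : CanFlip cond π j k) :
    Join (ReflTransGen (Flip cond)) (π * swap i j) (π * swap j k) := by
  obtain ⟨hij, hc₁, hd₁⟩ := h₁
  obtain ⟨hjk, hc₂, hd₂⟩ := h₂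
  obtain ⟨hac, hb⟩ := hcond _ _ _ hc₁ hc₂
  have hij' : i < j := by rw [Fin.lt_def]; omega
  have hjk' : j < k := by rw [Fin.lt_def]; omega
  have hik' := hij'.trans hjk'
  have hsub₁ : uIoo (π i) (π j) ⊆ uIoo (π i) (π k) :=
    uIoo_subset_Ioo ⟨inf_le_left, le_sup_left⟩ ⟨hb.1.le, hb.2.le⟩
  have hsub₂ : uIoo (π j) (π k) ⊆ uIoo (π i) (π k) :=
    uIoo_subset_Ioo ⟨hb.1.le, hb.2.le⟩ ⟨inf_le_right, le_sup_right⟩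
  have hd₁' : IncPairAfter π k (uIoo (π i) (π j)) := hd₁.of_succ hjk (notMem_uIoo_of_mem_uIoo hb)
  have braid : π * swap i j * swap j k * swap i j = π * swap j k * swap i j * swap j k := by
    have e₁ : swap i j * swap j k * swap i j = swap i k := by
      rw [swap_comm i j, swap_comm j k, swap_mul_swap_mul_swap hjk'.ne' hik'.ne']
    have e₂ : swap j k * swap i j * swap j k = swap i k := by
      rw [swap_mul_swap_mul_swap hij'.ne hik'.ne, swap_comm]
    simp only [mul_assoc] at e₁ e₂ ⊢
    rw [e₁, e₂]
  -- with `a b c` at `i j k`: `b a c → b c a → c b a` and `a c b → c a b → c b a`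
  refine ⟨_, .head (CanFlip.flip ⟨hjk, ?_, ?_⟩) (.single (CanFlip.flip ⟨hij, ?_, ?_⟩)),
    braid ▸ .head (CanFlip.flip ⟨hij, ?_, ?_⟩) (.single (CanFlip.flip ⟨hjk, ?_, ?_⟩))⟩ <;>
    simp only [Perm.mul_apply, swap_apply_left, swap_apply_right, swap_apply_of_ne_of_ne,
      hij'.ne, hjk'.ne', hik'.ne, hik'.ne', ne_eq, not_false_eq_true]
  · exact hac
  · exact (hd₂.mono le_rfl hsub₂).mul_swap_of_le hik'.le hjk'.le
  · exact hc₂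
  · exact ((hd₂.mul_swap_of_le hik'.le hjk'.le).mul_swap_of_le hjk'.le le_rfl).mono hjk'.le le_rfl
  · exact hac
  · exact ((hd₁'.mono le_rfl hsub₁).mul_swap_of_le hjk'.le le_rfl).mono hjk'.le le_rfl
  · exact hc₁
  · exact (hd₁'.mul_swap_of_le hjk'.le le_rfl).mul_swap_of_le hik'.le hjk'.le

theorem locallyConfluent_flip
    (hcond : ∀ a b c, cond a b → cond b c → cond a c ∧ b ∈ uIoo a c) :
    LocallyConfluent (Flip cond) := by
  have key {π : Perm (Fin n)} {i₁ j₁ i₂ j₂ : Fin n} (h₁ : CanFlip cond π i₁ j₁)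
      (h₂ : CanFlip cond π i₂ j₂) (hle : i₁ ≤ i₂) :
      Join (ReflTransGen (Flip cond)) (π * swap i₁ j₁) (π * swap i₂ j₂) := by
    rcases hle.eq_or_lt with rfl | hlt
    · obtain rfl : j₁ = j₂ := Fin.ext (h₁.1.trans h₂.1.symm)
      exact ⟨_, .refl, .refl⟩
    have hj₁ : j₁ ≤ i₂ := by
      rw [Fin.lt_def] at hlt; rw [Fin.le_def, h₁.1]; omega
    rcases hj₁.eq_or_lt with rfl | hj₁
    · exact join_of_adjacent hcond h₁ h₂
    · exact join_of_lt h₁ h₂ hj₁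
  rintro π _ _ ⟨i₁, j₁, h₁, rfl⟩ ⟨i₂, j₂, h₂, rfl⟩
  rcases le_total i₁ i₂ with h | h
  · exact key h₁ h₂ h
  · obtain ⟨d, h₂d, h₁d⟩ := key h₂ h₁ h
    exact ⟨d, h₁d, h₂d⟩

theorem Flip.toLex_lt (h : Flip (· < ·) π σ) : toLex ⇑π < toLex ⇑σ := by
  obtain ⟨i, j, hf, rfl⟩ := h
  refine ⟨i, fun x hx ↦ ?_, ?_⟩
  · simp [swap_apply_of_ne_of_ne hx.ne (hx.trans hf.lt).ne]
  · simpa [Perm.mul_apply] using hf.2.1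

theorem isNormalForm_flip_iff : IsNormalForm (Flip cond) π ↔ ¬ ∃ i j, CanFlip cond π i j :=
  ⟨fun h ⟨_, _, hf⟩ ↦ h _ hf.flip, fun h _ ⟨i, j, hf, _⟩ ↦ h ⟨i, j, hf⟩⟩

theorem exists_canFlip_iff : (∃ i j, CanFlip cond π i j) ↔
    ∃ (i j k : ℕ) (hi : i + 1 < n) (hk : k < n) (_ : i + 1 < j) (_ : j < k),
      cond (π ⟨i, by omega⟩) (π ⟨i + 1, hi⟩) ∧
      π ⟨j, by omega⟩ ∈ uIoo (π ⟨i, by omega⟩) (π ⟨i + 1, hi⟩) ∧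
      π ⟨k, hk⟩ ∈ uIoo (π ⟨i, by omega⟩) (π ⟨i + 1, hi⟩) ∧ π ⟨j, by omega⟩ < π ⟨k, hk⟩ := by
  constructor
  · rintro ⟨⟨i, _⟩, ⟨_, hi⟩, hi', hc, ⟨j, _⟩, ⟨k, hk⟩, hij, hjk, h₁, h₂, h₃⟩
    obtain rfl : _ = i + 1 := hi'
    exact ⟨i, j, k, hi, hk, hij, hjk, hc, h₁, h₂, h₃⟩
  · rintro ⟨i, j, k, hi, hk, hij, hjk, hc, h₁, h₂, h₃⟩
    exact ⟨⟨i, by omega⟩, ⟨i + 1, hi⟩, rfl, hc, ⟨j, by omega⟩, ⟨k, hk⟩, hij, hjk, h₁, h₂, h₃⟩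

theorem contains14d2d3_iff : Contains14d2d3 ⇑π ↔ ∃ i j, CanFlip (· < ·) π i j := by
  rw [exists_canFlip_iff]
  constructor
  · rintro ⟨i, j, k, hi, hk, hij, hjk, h₁, h₂, h₃⟩
    exact ⟨i, j, k, hi, hk, hij, hjk, h₁.trans (h₂.trans h₃), mem_uIoo_of_lt h₁ (h₂.trans h₃),
      mem_uIoo_of_lt (h₁.trans h₂) h₃, h₂⟩
  · rintro ⟨i, j, k, hi, hk, hij, hjk, hlt, h₁, h₂, h₃⟩
    rw [uIoo_of_lt hlt] at h₁ h₂
    exact ⟨i, j, k, hi, hk, hij, hjk, h₁.1, h₃, h₂.2⟩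

theorem contains41d2d3_iff : Contains41d2d3 ⇑π ↔ ∃ i j, CanFlip (· > ·) π i j := by
  rw [exists_canFlip_iff]
  constructor
  · rintro ⟨i, j, k, hi, hk, hij, hjk, h₁, h₂, h₃⟩
    exact ⟨i, j, k, hi, hk, hij, hjk, h₁.trans (h₂.trans h₃), mem_uIoo_of_gt h₁ (h₂.trans h₃),
      mem_uIoo_of_gt (h₁.trans h₂) h₃, h₂⟩
  · rintro ⟨i, j, k, hi, hk, hij, hjk, hgt, h₁, h₂, h₃⟩
    rw [uIoo_of_gt hgt] at h₁ h₂
    exact ⟨i, j, k, hi, hk, hij, hjk, h₁.1, h₃, h₂.2⟩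

end Vincular

open Vincular in
theorem wilf_14d2d3_41d2d3 (n : ℕ) :
    Nat.card {π : Equiv.Perm (Fin n) // ¬ Contains14d2d3 ⇑π} =
      Nat.card {π : Equiv.Perm (Fin n) // ¬ Contains41d2d3 ⇑π} := by
  have hasc (a b c : Fin n) (hab : a < b) (hbc : b < c) : a < c ∧ b ∈ uIoo a c :=
    ⟨hab.trans hbc, mem_uIoo_of_lt hab hbc⟩
  have hdesc (a b c : Fin n) (hab : a > b) (hbc : b > c) : a > c ∧ b ∈ uIoo a c :=
    ⟨hbc.trans hab, mem_uIoo_of_gt hbc hab⟩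
  have h14 (π : Perm (Fin n)) : ¬ Contains14d2d3 ⇑π ↔ IsNormalForm (Flip (· < ·)) π := by
    rw [contains14d2d3_iff, isNormalForm_flip_iff]
  have h41 (π : Perm (Fin n)) :
      ¬ Contains41d2d3 ⇑π ↔ IsNormalForm (Function.swap (Flip (· < ·))) π := by
    rw [contains41d2d3_iff, swap_flip, isNormalForm_flip_iff]
  rw [Nat.card_congr (Equiv.subtypeEquivRight h14), Nat.card_congr (Equiv.subtypeEquivRight h41)]
  exact card_isNormalForm_eq_card_isNormalForm_swap (fun π ↦ toLex ⇑π) (fun _ _ ↦ Flip.toLex_lt)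
    (locallyConfluent_flip hasc) (swap_flip ▸ locallyConfluent_flip hdesc)
end

section
/- Let σ = σ_1⋯σ_k-σ_{k+1} be a vincular pattern with 1 < σ_{k+1} < k+1, let ℓ be the index with σ_ℓ = σ_{k+1}−1 and m the index with σ_m = σ_{k+1}+1. If π is a permutation of length n whose first k entries are order-isomorphic to σ_1⋯σ_k and π_m − π_ℓ > 1, then π contains σ. -/
/-!
Put `w := π_ℓ + 1`. Since `σ_ℓ, σ_{k+1}, σ_m` are consecutive values and the prefix of `π` is
order-isomorphic to that of `σ`, a prefix position carrying `w` would carry a value strictly between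
`σ_ℓ` and `σ_m`, i.e. `σ_{k+1}` again; so `w` sits after position `k`. Appended to the prefix, it
compares with every prefix letter exactly as `σ_{k+1}` does, because `w` covers `π_ℓ` just as
`σ_{k+1}` covers `σ_ℓ`.
-/

/-- `π` contains the vincular pattern `σ₁⋯σ_k-σ_{k+1}` (one dash before the last
letter): there is an occurrence whose first `k` letters occupy consecutive
positions and whose last letter occurs strictly later. -/
def ContainsDashed {k n : ℕ} (σ : Fin (k + 1) → Fin (k + 1)) (π : Fin n → Fin n) : Prop :=
  ∃ g : Fin (k + 1) → Fin n, StrictMono g ∧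
    (∀ a : ℕ, (ha : a + 1 < k) →
      ((g ⟨a + 1, by omega⟩ : ℕ) = (g ⟨a, by omega⟩ : ℕ) + 1)) ∧
    (∀ a b : Fin (k + 1), σ a < σ b ↔ π (g a) < π (g b))

open Fin

def OrderIsomorphic {ι α β : Type*} [LT α] [LT β] (f : ι → α) (g : ι → β) : Prop :=
  ∀ a b, f a < f b ↔ g a < g b

namespace OrderIsomorphic

variable {ι α β : Type*} [LinearOrder α] [LinearOrder β] {f : ι → α} {g : ι → β}

theorem le_iff_le (h : OrderIsomorphic f g) (a b : ι) : f a ≤ f b ↔ g a ≤ g b := by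
  simpa only [not_lt] using (h b a).not

theorem lt_iff_lt_of_covBy (h : OrderIsomorphic f g) {l : ι} {x : α} {y : β}
    (hx : f l ⋖ x) (hy : g l ⋖ y) (a : ι) : f a < x ↔ g a < y := by
  rw [hx.lt_iff_le_left, hy.lt_iff_le_left, h.le_iff_le]

theorem eq_of_covBy_of_between (h : OrderIsomorphic f g) {l m i : ι} {x : α}
    (hlx : f l ⋖ x) (hxm : x ⋖ f m) (hli : g l < g i) (him : g i < g m) : f i = x :=
  hlx.eq_of_between hxm ((h l i).2 hli) ((h i m).2 him)

theorem of_init {k : ℕ} {f : Fin (k + 1) → α} {g : Fin (k + 1) → β}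
    (hinit : OrderIsomorphic (init f) (init g))
    (hlt : ∀ a, f (castSucc a) < f (last k) ↔ g (castSucc a) < g (last k))
    (hf : ∀ a, f (castSucc a) ≠ f (last k)) (hg : ∀ a, g (castSucc a) ≠ g (last k)) :
    OrderIsomorphic f g := by
  intro a b
  induction a using lastCases with
  | last =>
    induction b using lastCases with
    | last => simp only [lt_irrefl]
    | cast b =>
      rw [lt_iff_not_ge, lt_iff_not_ge, le_iff_lt_or_eq, le_iff_lt_or_eq, hlt b]
      simp only [hf b, hg b, or_false]
  | cast a =>
    induction b using lastCases with
    | last => exact hlt a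
    | cast b => exact hinit a b

end OrderIsomorphic

theorem Fin.covBy_of_val_add_one {n : ℕ} {a b : Fin n} (h : (a : ℕ) + 1 = b) : a ⋖ b :=
  ⟨Fin.lt_def.2 (by omega), fun c hac hcb => by
    rw [Fin.lt_def] at hac hcb
    omega⟩

theorem Fin.strictMono_snoc {α : Type*} [Preorder α] {k : ℕ} {p : Fin k → α} {x : α}
    (hp : StrictMono p) (hx : ∀ a, p a < x) : StrictMono (snoc p x : Fin (k + 1) → α) := by
  intro a b hab
  induction b using lastCases with
  | last =>
    induction a using lastCases with
    | last => exact absurd hab (lt_irrefl _)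
    | cast a => simpa only [snoc_castSucc, snoc_last] using hx a
  | cast b =>
    induction a using lastCases with
    | last => exact absurd hab (not_lt.2 (castSucc_lt_last b).le)
    | cast a => simpa only [snoc_castSucc] using hp (castSucc_lt_castSucc_iff.1 hab)

theorem containsDashed_of_prefix_snoc {k n : ℕ} {σ : Fin (k + 1) → Fin (k + 1)}
    {π : Fin n → Fin n} (hkn : k ≤ n) {j : Fin n} (hj : k ≤ j)
    (h : OrderIsomorphic σ (π ∘ snoc (castLE hkn) j)) : ContainsDashed σ π := by
  refine ⟨snoc (castLE hkn) j, strictMono_snoc (strictMono_castLE hkn) fun a => ?_,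
    fun a ha => ?_, h⟩
  · rw [Fin.lt_def, val_castLE]
    omega
  · simp [snoc, ha, show a < k by omega]

theorem prefix_forces_containment_middle (k n v ℓ m : ℕ)
    (hv1 : 1 ≤ v) (hv2 : v ≤ k - 1) (hℓ : ℓ < k) (hm : m < k)
    (σ : Fin (k + 1) → Fin (k + 1)) (hσ : Function.Bijective σ)
    (hlast : σ ⟨k, by omega⟩ = ⟨v, by omega⟩)
    (hℓval : σ ⟨ℓ, by omega⟩ = ⟨v - 1, by omega⟩)
    (hmval : σ ⟨m, by omega⟩ = ⟨v + 1, by omega⟩)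
    (π : Equiv.Perm (Fin n)) (hkn : k ≤ n)
    (hpre : ∀ (a b : ℕ) (ha : a < k) (hb : b < k),
      σ ⟨a, by omega⟩ < σ ⟨b, by omega⟩ ↔ π ⟨a, by omega⟩ < π ⟨b, by omega⟩)
    (hgap : (π ⟨ℓ, by omega⟩ : ℕ) + 1 < (π ⟨m, by omega⟩ : ℕ)) :
    ContainsDashed σ ⇑π := by
  have hprefix : OrderIsomorphic (init σ) (π ∘ castLE hkn) := fun a b => hpre a b a.2 b.2
  have hσℓ : init σ ⟨ℓ, hℓ⟩ ⋖ σ (last k) := by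
    change σ ⟨ℓ, _⟩ ⋖ σ ⟨k, _⟩
    rw [hℓval, hlast]
    exact covBy_of_val_add_one (by simp only; omega)
  have hσm : σ (last k) ⋖ init σ ⟨m, hm⟩ := by
    change σ ⟨k, _⟩ ⋖ σ ⟨m, _⟩
    rw [hmval, hlast]
    exact covBy_of_val_add_one rfl
  set w : Fin n := ⟨π ⟨ℓ, by omega⟩ + 1, by omega⟩
  have hπℓ : (π ∘ castLE hkn) ⟨ℓ, hℓ⟩ ⋖ w := covBy_of_val_add_one rfl
  have hπm : w < (π ∘ castLE hkn) ⟨m, hm⟩ := Fin.lt_def.2 hgap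
  set j := π.symm w
  have hj : k ≤ j := by
    by_contra! hjk
    have hσj := hprefix.eq_of_covBy_of_between hσℓ hσm (i := ⟨j, hjk⟩)
      (by simpa [j] using hπℓ.lt) (by simpa [j] using hπm)
    exact (castSucc_lt_last _).ne (hσ.1 hσj)
  refine containsDashed_of_prefix_snoc hkn hj ?_
  rw [comp_snoc, π.apply_symm_apply]
  refine .of_init ?_ (fun a => ?_) (fun a => hσ.1.ne (castSucc_lt_last a).ne) (fun a => ?_)
  · rwa [init_snoc]
  · rw [snoc_castSucc, snoc_last]
    exact hprefix.lt_iff_lt_of_covBy hσℓ hπℓ a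
  · rw [snoc_castSucc, snoc_last, ← π.apply_symm_apply w]
    exact π.injective.ne (Fin.ne_of_lt (Fin.lt_def.2 (by simp only [val_castLE]; omega)))
end

section
/- For every n ≥ 0, the number of permutations of length n avoiding the vincular pattern 2341 (consecutive pattern, all adjacencies required) with an additional dashed letter 5 appended, i.e. 2341-5, equals the number avoiding 1342-5, provided the consecutive patterns 2341 and 1342 are Wilf-equivalent; more generally, if consecutive patterns α and β of length k satisfy |S_n(α)| = |S_n(β)| for all n, then |S_n(α-(k+1))| = |S_n(β-(k+1))| for all n. -/
/-- `π` contains the consecutive pattern `α`: some factor of `π` of length `k`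
is order-isomorphic to `α`. -/
def ContainsConsec {k n : ℕ} (α : Fin k → Fin k) (π : Fin n → Fin n) : Prop :=
  ∃ (i : ℕ) (h : i + k ≤ n), ∀ a b : Fin k,
    α a < α b ↔
      π ⟨i + a, by have := a.isLt; omega⟩ < π ⟨i + b, by have := b.isLt; omega⟩

/-- `π` contains the vincular pattern `α-(k+1)`: some factor of length `k` is
order-isomorphic to `α` and some strictly later entry exceeds all of its
entries. -/
def ContainsConsecMax {k n : ℕ} (α : Fin k → Fin k) (π : Fin n → Fin n) : Prop :=
  ∃ (i j : ℕ) (hj : j < n) (hij : i + k ≤ j),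
    (∀ a b : Fin k,
      α a < α b ↔
        π ⟨i + a, by have := a.isLt; omega⟩ < π ⟨i + b, by have := b.isLt; omega⟩) ∧
    (∀ a : Fin k, π ⟨i + a, by have := a.isLt; omega⟩ < π ⟨j, hj⟩)

/-!
Let the largest entry of `π ∈ S_{n+1}` sit at position `p`. No occurrence of `α-(k+1)` can use
this entry inside its factor (nothing later exceeds it), so an occurrence either lies left of `p`,
where the maximum itself serves as the dashed letter, or lies entirely right of `p`. Hence `π`
avoids `α-(k+1)` iff the standardization of its left part avoids `α` and that of its right part
avoids `α-(k+1)`. Permuting positions inside the two blocks is a group action on such `π`, for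
which the pair of standardizations is equivariant (with right multiplication on pairs), so every
pair is realised by the same number `c(n, p)` of permutations (namely `n.choose p`), independent
of the pattern. This gives
`|S_{n+1}(α-(k+1))| = ∑ₚ c(n, p) · |S_p(α)| · |S_{n-p}(α-(k+1))|`,
and the theorem follows by strong induction on `n`.
-/

namespace ConsecPattern

open Equiv Function

section Counting

variable {G H : Type*} [Group G] [Monoid H]

/-- `F` is equivariant for the right action of `G` through `φ`, so each fibre of `F` is carried
bijectively onto the fibre over `1`. -/
theorem card_subtype_and_mem_eq_mul (φ : G →* H) (P : H → Prop) (hP : ∀ x g, P x → P (x * φ g))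
    (F : H → G) (hF : ∀ x g, F (x * φ g) = F x * g) (S : Set G) :
    Nat.card {x // P x ∧ F x ∈ S} = Nat.card S * Nat.card {x // P x ∧ F x = 1} := by
  rw [← Nat.card_prod]
  exact Nat.card_congr
    { toFun := fun x => (⟨F x, x.2.2⟩, ⟨x * φ (F x)⁻¹, hP _ _ x.2.1, by simp [hF]⟩)
      invFun := fun y => ⟨y.2 * φ y.1, hP _ _ y.2.2.1, by simp [hF, y.2.2.2]⟩
      left_inv := fun x => Subtype.ext (by simp [mul_assoc, ← map_mul])
      right_inv := fun y => Prod.ext (Subtype.ext (by simp [hF, y.2.2.2]))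
        (Subtype.ext (by simp [mul_assoc, ← map_mul, hF, y.2.2.2])) }

theorem card_subtype_eq_sum_card_fiber {X Y : Type*} [Finite X] [Fintype Y] (f : X → Y)
    (Q : X → Prop) : Nat.card {x // Q x} = ∑ y, Nat.card {x // f x = y ∧ Q x} := by
  rw [← Nat.card_sigma]
  exact Nat.card_congr
    { toFun := fun x => ⟨f x, x, rfl, x.2⟩
      invFun := fun y => ⟨y.2.1, y.2.2.2⟩
      left_inv := fun _ => rfl
      right_inv := by rintro ⟨_, x, rfl, hx⟩; rfl }

end Counting

section Standardization

variable {m : ℕ} {γ : Type*} [LinearOrder γ]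

def std (w : Fin m → γ) : Perm (Fin m) := (Tuple.sort w)⁻¹

theorem std_lt_std_iff {w : Fin m → γ} (hw : Injective w) (s t : Fin m) :
    std w s < std w t ↔ w s < w t := by
  have hsorted : StrictMono (w ∘ Tuple.sort w) :=
    (Tuple.monotone_sort w).strictMono_of_injective (hw.comp (Equiv.injective _))
  conv_rhs => rw [← (Tuple.sort w).apply_symm_apply s, ← (Tuple.sort w).apply_symm_apply t]
  exact hsorted.lt_iff_lt.symm

theorem eq_std_of_lt_iff {w : Fin m → γ} (hw : Injective w) {σ : Perm (Fin m)}
    (h : ∀ s t, σ s < σ t ↔ w s < w t) : σ = std w := by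
  have hmono : StrictMono (σ * (std w)⁻¹) := fun a b hab => by
    simpa [h, ← std_lt_std_iff hw] using hab
  exact mul_inv_eq_one.mp (Equiv.coe_inj.mp hmono.eq_id)

theorem std_comp_perm {w : Fin m → γ} (hw : Injective w) (ρ : Perm (Fin m)) :
    std (w ∘ ρ) = std w * ρ :=
  (eq_std_of_lt_iff (hw.comp ρ.injective) fun s t => std_lt_std_iff hw (ρ s) (ρ t)).symm

end Standardization

section Words

variable {k m : ℕ} {γ δ : Type*} [LT γ] [LT δ]

def WordContainsConsec (α : Fin k → Fin k) (w : Fin m → γ) : Prop :=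
  ∃ (i : ℕ) (h : i + k ≤ m), ∀ a b : Fin k,
    α a < α b ↔
      w ⟨i + a, by have := a.isLt; omega⟩ < w ⟨i + b, by have := b.isLt; omega⟩

def WordContainsConsecMax (α : Fin k → Fin k) (w : Fin m → γ) : Prop :=
  ∃ (i j : ℕ) (hj : j < m) (hij : i + k ≤ j),
    (∀ a b : Fin k,
      α a < α b ↔
        w ⟨i + a, by have := a.isLt; omega⟩ < w ⟨i + b, by have := b.isLt; omega⟩) ∧
    (∀ a : Fin k, w ⟨i + a, by have := a.isLt; omega⟩ < w ⟨j, hj⟩)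

variable {α : Fin k → Fin k} {v : Fin m → γ} {w : Fin m → δ}

theorem wordContainsConsec_congr (h : ∀ s t, v s < v t ↔ w s < w t) :
    WordContainsConsec α v ↔ WordContainsConsec α w := by
  simp only [WordContainsConsec, h]

theorem wordContainsConsecMax_congr (h : ∀ s t, v s < v t ↔ w s < w t) :
    WordContainsConsecMax α v ↔ WordContainsConsecMax α w := by
  simp only [WordContainsConsecMax, h]

end Words

section Blocks

variable {n : ℕ} {γ : Type*} (p : Fin (n + 1))

def blockEquiv : Fin p ⊕ (Fin 1 ⊕ Fin (n - p)) ≃ Fin (n + 1) :=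
  ((sumCongr (Equiv.refl _) finSumFinEquiv).trans finSumFinEquiv).trans (finCongr (by omega))

@[simp] theorem blockEquiv_inl (t : Fin p) : blockEquiv p (.inl t) = ⟨t, by omega⟩ := by
  ext; simp [blockEquiv]

@[simp] theorem blockEquiv_inr_inl (z : Fin 1) : blockEquiv p (.inr (.inl z)) = p := by
  ext; simp [blockEquiv, Fin.fin_one_eq_zero z]

@[simp] theorem blockEquiv_inr_inr (t : Fin (n - p)) :
    blockEquiv p (.inr (.inr t)) = ⟨p + 1 + t, by omega⟩ := by
  ext
  simp only [blockEquiv, trans_apply, sumCongr_apply, coe_refl, Sum.map_inr,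
    finSumFinEquiv_apply_right, finCongr_apply, Fin.val_cast, Fin.val_natAdd]
  omega

def blockPerm : Perm (Fin p) × Perm (Fin (n - p)) →* Perm (Fin (n + 1)) :=
  (blockEquiv p).permCongrHom.toMonoidHom.comp <| (Perm.sumCongrHom _ _).comp <|
    (MonoidHom.id _).prodMap ((Perm.sumCongrHom _ _).comp (MonoidHom.inr _ _))

theorem blockPerm_apply_blockEquiv (g : Perm (Fin p) × Perm (Fin (n - p)))
    (x : Fin p ⊕ (Fin 1 ⊕ Fin (n - p))) :
    blockPerm p g (blockEquiv p x) = blockEquiv p (Sum.map g.1 (Sum.map id g.2) x) := by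
  simp only [blockPerm, MulEquiv.toMonoidHom_eq_coe, MonoidHom.coe_comp, MonoidHom.coe_coe,
    comp_apply, permCongrHom_coe, permCongr_apply, symm_apply_apply]
  rfl

@[simp] theorem blockPerm_apply_self (g : Perm (Fin p) × Perm (Fin (n - p))) :
    blockPerm p g p = p := by
  simpa using blockPerm_apply_blockEquiv p g (.inr (.inl 0))

def leftPart (w : Fin (n + 1) → γ) : Fin p → γ := w ∘ blockEquiv p ∘ .inl

def rightPart (w : Fin (n + 1) → γ) : Fin (n - p) → γ := w ∘ blockEquiv p ∘ .inr ∘ .inr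

theorem leftPart_injective {w : Fin (n + 1) → γ} (hw : Injective w) :
    Injective (leftPart p w) :=
  hw.comp ((blockEquiv p).injective.comp Sum.inl_injective)

theorem rightPart_injective {w : Fin (n + 1) → γ} (hw : Injective w) :
    Injective (rightPart p w) :=
  hw.comp ((blockEquiv p).injective.comp (Sum.inr_injective.comp Sum.inr_injective))

theorem leftPart_mul_blockPerm (π : Perm (Fin (n + 1))) (g : Perm (Fin p) × Perm (Fin (n - p))) :
    leftPart p ⇑(π * blockPerm p g) = leftPart p π ∘ g.1 := by
  ext t
  simp only [leftPart, Perm.coe_mul, comp_apply, blockPerm_apply_blockEquiv, Sum.map_inl]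

theorem rightPart_mul_blockPerm (π : Perm (Fin (n + 1))) (g : Perm (Fin p) × Perm (Fin (n - p))) :
    rightPart p ⇑(π * blockPerm p g) = rightPart p π ∘ g.2 := by
  ext t
  simp only [rightPart, Perm.coe_mul, comp_apply, blockPerm_apply_blockEquiv, Sum.map_inr]

end Blocks

section Decomposition

variable {k n : ℕ} {γ : Type*} [Preorder γ] {α : Fin k → Fin k} {w : Fin (n + 1) → γ}
  {p : Fin (n + 1)}

theorem wordContainsConsecMax_of_leftPart (hp : ∀ j, j ≠ p → w j < w p)
    (h : WordContainsConsec α (leftPart p w)) : WordContainsConsecMax α w := by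
  obtain ⟨i, hi, hpat⟩ := h
  refine ⟨i, p, p.isLt, hi, fun a b => by simpa [leftPart] using hpat a b, fun a => hp _ ?_⟩
  exact Fin.ne_of_val_ne (by have := a.isLt; dsimp only; omega)

theorem wordContainsConsecMax_of_rightPart (h : WordContainsConsecMax α (rightPart p w)) :
    WordContainsConsecMax α w := by
  obtain ⟨i, j, hj, hij, hpat, hbig⟩ := h
  refine ⟨p + 1 + i, p + 1 + j, by omega, by omega, fun a b => ?_, fun a => ?_⟩
  · simpa [rightPart, Nat.add_assoc] using hpat a b
  · simpa [rightPart, Nat.add_assoc] using hbig a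

theorem leftPart_or_rightPart_of_wordContainsConsecMax (hp : ∀ j, j ≠ p → w j < w p)
    (h : WordContainsConsecMax α w) :
    WordContainsConsec α (leftPart p w) ∨ WordContainsConsecMax α (rightPart p w) := by
  obtain ⟨i, j, hj, hij, hpat, hbig⟩ := h
  by_cases hjp : j = p
  · subst hjp
    exact .inl ⟨i, hij, by simpa [leftPart] using hpat⟩
  have hp_not_in_factor : ∀ a : Fin k, i + a ≠ p := fun a hap =>
    lt_asymm (hp _ fun h => hjp (congrArg Fin.val h))
      (by simpa [show (⟨i + a, _⟩ : Fin (n + 1)) = p from Fin.ext hap] using hbig a)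
  obtain hleft | hright : i + k ≤ p ∨ p < i := by
    by_contra! h
    exact hp_not_in_factor ⟨p - i, by omega⟩ (by simp only; omega)
  · exact .inl ⟨i, hleft, by simpa [leftPart] using hpat⟩
  · obtain ⟨i, rfl⟩ : ∃ i', i = p + 1 + i' := ⟨i - (p + 1), by omega⟩
    obtain ⟨j, rfl⟩ : ∃ j', j = p + 1 + j' := ⟨j - (p + 1), by omega⟩
    refine .inr ⟨i, j, by omega, by omega, fun a b => ?_, fun a => ?_⟩
    · simpa [rightPart, Nat.add_assoc] using hpat a b
    · simpa [rightPart, Nat.add_assoc] using hbig a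

theorem wordContainsConsecMax_iff_of_isMax (hp : ∀ j, j ≠ p → w j < w p) :
    WordContainsConsecMax α w ↔
      WordContainsConsec α (leftPart p w) ∨ WordContainsConsecMax α (rightPart p w) :=
  ⟨leftPart_or_rightPart_of_wordContainsConsecMax hp,
    (·.elim (wordContainsConsecMax_of_leftPart hp) wordContainsConsecMax_of_rightPart)⟩

end Decomposition

section Permutations

variable {k n : ℕ} {α : Fin k → Fin k}

theorem containsConsec_std_iff {m : ℕ} {γ : Type*} [LinearOrder γ] {w : Fin m → γ}
    (hw : Injective w) : ContainsConsec α ⇑(std w) ↔ WordContainsConsec α w :=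
  wordContainsConsec_congr (std_lt_std_iff hw)

theorem containsConsecMax_std_iff {m : ℕ} {γ : Type*} [LinearOrder γ] {w : Fin m → γ}
    (hw : Injective w) : ContainsConsecMax α ⇑(std w) ↔ WordContainsConsecMax α w :=
  wordContainsConsecMax_congr (std_lt_std_iff hw)

def avoidingPairs (α : Fin k → Fin k) (p : Fin (n + 1)) :
    Set (Perm (Fin p) × Perm (Fin (n - p))) :=
  {σ : Perm (Fin p) | ¬ ContainsConsec α ⇑σ} ×ˢ
    {τ : Perm (Fin (n - p)) | ¬ ContainsConsecMax α ⇑τ}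

def splitStd (p : Fin (n + 1)) (π : Perm (Fin (n + 1))) : Perm (Fin p) × Perm (Fin (n - p)) :=
  (std (leftPart p π), std (rightPart p π))

theorem splitStd_mul_blockPerm (p : Fin (n + 1)) (π : Perm (Fin (n + 1)))
    (g : Perm (Fin p) × Perm (Fin (n - p))) :
    splitStd p (π * blockPerm p g) = splitStd p π * g := by
  rw [splitStd, leftPart_mul_blockPerm, rightPart_mul_blockPerm,
    std_comp_perm (leftPart_injective p π.injective),
    std_comp_perm (rightPart_injective p π.injective)]
  rfl

theorem not_containsConsecMax_iff_splitStd_mem {p : Fin (n + 1)} {π : Perm (Fin (n + 1))}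
    (hπ : π p = Fin.last n) :
    ¬ ContainsConsecMax α ⇑π ↔ splitStd p π ∈ avoidingPairs α p := by
  have hmax : ∀ j, j ≠ p → π j < π p := fun j hj =>
    hπ ▸ lt_of_le_of_ne (Fin.le_last _) (hπ ▸ π.injective.ne hj)
  rw [avoidingPairs, Set.mem_prod, Set.mem_ofPred_eq, Set.mem_ofPred_eq, splitStd,
    containsConsec_std_iff (leftPart_injective p π.injective),
    containsConsecMax_std_iff (rightPart_injective p π.injective), ← not_or]
  exact not_congr (wordContainsConsecMax_iff_of_isMax hmax)

theorem card_avoid_consecMax_zero :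
    Nat.card {π : Perm (Fin 0) // ¬ ContainsConsecMax α ⇑π} = 1 := by
  rw [Nat.card_congr (subtypeUnivEquiv fun _ ⟨_, _, hj, _⟩ => Nat.not_lt_zero _ hj)]
  simp

theorem card_avoid_consecMax_succ (α : Fin k → Fin k) (n : ℕ) :
    Nat.card {π : Perm (Fin (n + 1)) // ¬ ContainsConsecMax α ⇑π} =
      ∑ p : Fin (n + 1), Nat.card {σ : Perm (Fin p) // ¬ ContainsConsec α ⇑σ} *
        Nat.card {τ : Perm (Fin (n - p)) // ¬ ContainsConsecMax α ⇑τ} *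
        Nat.card {π : Perm (Fin (n + 1)) // π p = Fin.last n ∧ splitStd p π = 1} := by
  rw [card_subtype_eq_sum_card_fiber fun π : Perm (Fin (n + 1)) => π.symm (Fin.last n)]
  refine Finset.sum_congr rfl fun p _ => ?_
  calc _ = Nat.card {π : Perm (Fin (n + 1)) //
          π p = Fin.last n ∧ splitStd p π ∈ avoidingPairs α p} :=
        Nat.card_congr <| subtypeEquivRight fun π => by
          rw [symm_apply_eq, eq_comm]
          exact and_congr_right not_containsConsecMax_iff_splitStd_mem
    _ = Nat.card (avoidingPairs α p) *
          Nat.card {π : Perm (Fin (n + 1)) // π p = Fin.last n ∧ splitStd p π = 1} :=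
        card_subtype_and_mem_eq_mul (blockPerm p) _
          (fun π g hπ => by rw [Perm.mul_apply, blockPerm_apply_self, hπ]) _
          (splitStd_mul_blockPerm p) _
    _ = _ := by rw [avoidingPairs, Nat.card_congr (Equiv.Set.prod _ _), Nat.card_prod]; rfl

end Permutations

end ConsecPattern

theorem consec_wilf_extends_to_dashedMax_general (k : ℕ) (α β : Fin k → Fin k)
    (hwe : ∀ m : ℕ, Nat.card {π : Equiv.Perm (Fin m) // ¬ ContainsConsec α ⇑π} =
      Nat.card {π : Equiv.Perm (Fin m) // ¬ ContainsConsec β ⇑π}) :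
    ∀ n : ℕ, Nat.card {π : Equiv.Perm (Fin n) // ¬ ContainsConsecMax α ⇑π} =
      Nat.card {π : Equiv.Perm (Fin n) // ¬ ContainsConsecMax β ⇑π} := by
  intro n
  induction n using Nat.strong_induction_on with
  | _ n ih =>
    cases n with
    | zero =>
      rw [ConsecPattern.card_avoid_consecMax_zero, ConsecPattern.card_avoid_consecMax_zero]
    | succ n =>
      rw [ConsecPattern.card_avoid_consecMax_succ, ConsecPattern.card_avoid_consecMax_succ]
      exact Finset.sum_congr rfl fun p _ => by rw [hwe p, ih (n - p) (by omega)]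

/-- If two consecutive patterns `α, β` of length `k` are Wilf-equivalent, then
so are the vincular patterns `α-(k+1)` and `β-(k+1)` (Kitaev, Elizalde); in
particular `2341-5` and `1342-5` are Wilf-equivalent since `2341 ≡ 1342`. -/
theorem consec_wilf_extends_to_dashedMax (k : ℕ) (α β : Fin k → Fin k)
    (hα : Function.Bijective α) (hβ : Function.Bijective β)
    (hwe : ∀ m : ℕ, Nat.card {π : Equiv.Perm (Fin m) // ¬ ContainsConsec α ⇑π} =
      Nat.card {π : Equiv.Perm (Fin m) // ¬ ContainsConsec β ⇑π}) :
    ∀ n : ℕ, Nat.card {π : Equiv.Perm (Fin n) // ¬ ContainsConsecMax α ⇑π} =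
      Nat.card {π : Equiv.Perm (Fin n) // ¬ ContainsConsecMax β ⇑π} :=
  consec_wilf_extends_to_dashedMax_general k α β hwe
end
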